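/- arXiv:math/0503416 — 2 statements merged into one kernel-verified Lean document; each statement's English description precedes it below -/
import Mathlib

section
/- Every nonevasive finite simplicial complex is collapsible (collapses to a point). -/
/-- An abstract simplicial complex on a vertex type `V`: a collection of
nonempty finite subsets of `V` closed under passing to nonempty subsets. -/
structure SComplex (V : Type*) where
  faces : Set (Finset V)
  nonempty_of_mem : ∀ σ ∈ faces, σ.Nonempty
  down_closed : ∀ σ ∈ faces, ∀ τ ⊆ σ, τ.Nonempty → τ ∈ faces

namespace SComplex

variable {V W : Type*}

/-- Deletion of a vertex: all faces not containing `v`. -/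
def del (X : SComplex V) (v : V) : SComplex V where
  faces := {σ ∈ X.faces | v ∉ σ}
  nonempty_of_mem := fun σ h => X.nonempty_of_mem σ h.1
  down_closed := fun σ h τ hτ hne =>
    ⟨X.down_closed σ h.1 τ hτ hne, fun hv => h.2 (hτ hv)⟩

/-- The link of a vertex `v`: faces `σ` avoiding `v` with `σ ∪ {v}` a face. -/
def link [DecidableEq V] (X : SComplex V) (v : V) : SComplex V where
  faces := {σ | v ∉ σ ∧ σ.Nonempty ∧ insert v σ ∈ X.faces}
  nonempty_of_mem := fun _ h => h.2.1
  down_closed := fun σ h τ hτ hne =>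
    ⟨fun hv => h.1 (hτ hv), hne,
      X.down_closed _ h.2.2 _ (Finset.insert_subset_insert v hτ)
        ⟨v, Finset.mem_insert_self v _⟩⟩

/-- The one-point complex on the vertex `v`. -/
def point (v : V) : SComplex V where
  faces := {{v}}
  nonempty_of_mem := fun σ h => by
    simp only [Set.mem_singleton_iff] at h; subst h; exact Finset.singleton_nonempty v
  down_closed := fun σ h τ hτ hne => by
    simp only [Set.mem_singleton_iff] at h ⊢
    subst h
    exact Finset.Subset.antisymm hτ
      (Finset.singleton_subset_iff.2 (by
        obtain ⟨x, hx⟩ := hne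
        have := Finset.mem_singleton.1 (hτ hx)
        subst this; exact hx))

/-- Nonevasiveness, defined recursively: a point is nonevasive, and `X` is
nonevasive if some vertex `v` has both the deletion `X \ {v}` and the link
`lk_X v` nonevasive. -/
inductive Nonevasive [DecidableEq V] : SComplex V → Prop where
  | point (X : SComplex V) (v : V) (h : X.faces = {({v} : Finset V)}) : Nonevasive X
  | step (X : SComplex V) (v : V) (hv : ({v} : Finset V) ∈ X.faces)
      (hdel : Nonevasive (X.del v)) (hlink : Nonevasive (X.link v)) : Nonevasive X

/-- `NERed X Y` (`X ↘_NE Y`): `Y` is obtained from `X` by successively deleting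
vertices whose links are nonevasive. -/
inductive NERed [DecidableEq V] : SComplex V → SComplex V → Prop where
  | refl (X : SComplex V) : NERed X X
  | step (X Y : SComplex V) (v : V) (hv : ({v} : Finset V) ∈ X.faces)
      (hlink : Nonevasive (X.link v)) (h : NERed (X.del v) Y) : NERed X Y

/-- An elementary collapse: removal of a free pair `τ ⊂ σ` with
`dim σ = dim τ + 1` and `σ` the unique face properly containing `τ`. -/
def IsElemCollapse (X Y : SComplex V) : Prop :=
  ∃ σ τ : Finset V, σ ∈ X.faces ∧ τ ∈ X.faces ∧ τ ⊂ σ ∧ σ.card = τ.card + 1 ∧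
    (∀ ρ ∈ X.faces, τ ⊂ ρ → ρ = σ) ∧ Y.faces = X.faces \ {σ, τ}

/-- `Collapses X Y`: `X` collapses onto `Y` by a sequence of elementary collapses. -/
inductive Collapses : SComplex V → SComplex V → Prop where
  | refl (X : SComplex V) : Collapses X X
  | step (X Z Y : SComplex V) (h : IsElemCollapse X Z) (h' : Collapses Z Y) :
      Collapses X Y

/-- The simplicial join of two complexes. -/
def join [DecidableEq V] [DecidableEq W] (X : SComplex V) (Y : SComplex W) :
    SComplex (V ⊕ W) where
  faces := {ρ | ρ.Nonempty ∧ ∃ (σ : Finset V) (τ : Finset W),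
      (σ ∈ X.faces ∨ σ = ∅) ∧ (τ ∈ Y.faces ∨ τ = ∅) ∧
      ρ = σ.image Sum.inl ∪ τ.image Sum.inr}
  nonempty_of_mem := fun _ h => h.1
  down_closed := by
    rintro ρ ⟨-, σ, τ, hσ, hτ, rfl⟩ ρ' hsub hne
    classical
    refine ⟨hne, σ.filter (fun a => Sum.inl a ∈ ρ'), τ.filter (fun b => Sum.inr b ∈ ρ'),
      ?_, ?_, ?_⟩
    · rcases (σ.filter (fun a => Sum.inl a ∈ ρ')).eq_empty_or_nonempty with h | h
      · exact Or.inr h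
      · rcases hσ with hσ | rfl
        · exact Or.inl (X.down_closed σ hσ _ (Finset.filter_subset _ _) h)
        · simp at h
    · rcases (τ.filter (fun b => Sum.inr b ∈ ρ')).eq_empty_or_nonempty with h | h
      · exact Or.inr h
      · rcases hτ with hτ | rfl
        · exact Or.inl (Y.down_closed τ hτ _ (Finset.filter_subset _ _) h)
        · simp at h
    · ext z
      cases z with
      | inl a =>
        constructor
        · intro hz
          have := hsub hz
          simp only [Finset.mem_union, Finset.mem_image] at this ⊢
          refine Or.inl ⟨a, ?_, rfl⟩
          simp only [Finset.mem_filter]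
          rcases this with ⟨a', ha', he⟩ | ⟨b', _, he⟩
          · cases he; exact ⟨ha', hz⟩
          · cases he
        · intro hz
          simp only [Finset.mem_union, Finset.mem_image, Finset.mem_filter] at hz
          rcases hz with ⟨a', ⟨_, hmem⟩, he⟩ | ⟨b', _, he⟩
          · cases he; exact hmem
          · cases he
      | inr b =>
        constructor
        · intro hz
          have := hsub hz
          simp only [Finset.mem_union, Finset.mem_image] at this ⊢
          refine Or.inr ⟨b, ?_, rfl⟩
          simp only [Finset.mem_filter]
          rcases this with ⟨a', _, he⟩ | ⟨b', hb', he⟩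
          · cases he
          · cases he; exact ⟨hb', hz⟩
        · intro hz
          simp only [Finset.mem_union, Finset.mem_image, Finset.mem_filter] at hz
          rcases hz with ⟨a', _, he⟩ | ⟨b', ⟨_, hmem⟩, he⟩
          · cases he
          · cases he; exact hmem

end SComplex

/-- The order complex of a subset `Q` of a poset `P`: simplices are the
nonempty finite chains contained in `Q`. -/
def orderComplexOn (P : Type*) [PartialOrder P] (Q : Set P) : SComplex P where
  faces := {σ | σ.Nonempty ∧ (∀ x ∈ σ, x ∈ Q) ∧ ∀ x ∈ σ, ∀ y ∈ σ, x ≤ y ∨ y ≤ x}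
  nonempty_of_mem := fun _ h => h.1
  down_closed := fun σ h τ hτ hne =>
    ⟨hne, fun x hx => h.2.1 x (hτ hx), fun x hx y hy => h.2.2 x (hτ hx) y (hτ hy)⟩

namespace SComplex

variable {V : Type*}

theorem ext' {X Y : SComplex V} (h : X.faces = Y.faces) : X = Y := by
  cases X; cases Y; simp_all

theorem Collapses.trans {X Y Z : SComplex V} (h : Collapses X Y)
    (h' : Collapses Y Z) : Collapses X Z := by
  induction h with
  | refl => exact h'
  | step A B C hAB _ ih => exact .step A B Z hAB (ih h')

/-- Remove an up-closed set of faces from a complex. -/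
def restrict (X : SComplex V) (S : Set (Finset V))
    (hS : ∀ ρ ∈ X.faces, ∀ s ∈ S, s ⊆ ρ → ρ ∈ S) : SComplex V where
  faces := X.faces \ S
  nonempty_of_mem := fun σ h => X.nonempty_of_mem σ h.1
  down_closed := fun σ h τ hτ hne =>
    ⟨X.down_closed σ h.1 τ hτ hne, fun hτS => h.2 (hS σ h.1 τ hτS hτ)⟩

theorem link_faces [DecidableEq V] (X : SComplex V) (v : V) :
    (X.link v).faces = {σ | v ∉ σ ∧ σ.Nonempty ∧ insert v σ ∈ X.faces} := rfl

theorem nered_aux [DecidableEq V] {v : V} {L M : SComplex V} (h : Collapses L M) :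
    ∀ X : SComplex V, X.link v = L → ∃ X' : SComplex V,
      Collapses X X' ∧ X'.link v = M ∧ X'.del v = X.del v := by
  induction h with
  | refl L => exact fun X hX => ⟨X, .refl X, hX, rfl⟩
  | step L Z M hLZ _ ih =>
    intro X hX
    obtain ⟨σ, τ, hσ, hτ, hst, hcard, hfree, hZ⟩ := hLZ
    rw [← hX, link_faces] at hσ hτ hfree
    -- upward-closedness of the removed pair in X
    have hup : ∀ ρ ∈ X.faces, ∀ s ∈ ({insert v σ, insert v τ} : Set (Finset V)),
        s ⊆ ρ → ρ ∈ ({insert v σ, insert v τ} : Set (Finset V)) := by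
      rintro ρ hρ s hs hsρ
      have hvρ : v ∈ ρ := by
        rcases hs with rfl | rfl <;> exact hsρ (Finset.mem_insert_self v _)
      have herase : ρ.erase v ⊇ τ := by
        intro x hx
        have hxρ : x ∈ ρ := by
          rcases hs with rfl | rfl
          · exact hsρ (Finset.mem_insert_of_mem (hst.1 hx))
          · exact hsρ (Finset.mem_insert_of_mem hx)
        exact Finset.mem_erase.2 ⟨fun hxv => hτ.1 (hxv ▸ hx), hxρ⟩
      have hρe : ρ = insert v (ρ.erase v) := (Finset.insert_erase hvρ).symm
      by_cases hne : ρ.erase v = τ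
      · right
        rw [hρe, hne]
        exact rfl
      · have hmemlink : ρ.erase v ∈ (X.link v).faces := by
          refine ⟨Finset.notMem_erase v ρ, hτ.2.1.mono herase, ?_⟩
          rw [← hρe]; exact hρ
        have hproper : τ ⊂ ρ.erase v := Finset.ssubset_iff_subset_ne.2 ⟨herase, Ne.symm hne⟩
        have : ρ.erase v = σ := hfree _ hmemlink hproper
        left
        rw [hρe, this]
    set X' : SComplex V := X.restrict {insert v σ, insert v τ} hup with hX'
    have hX'faces : X'.faces = X.faces \ {insert v σ, insert v τ} := rfl
    have hvσ : v ∉ σ := hσ.1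
    have hvτ : v ∉ τ := hτ.1
    have hcol : IsElemCollapse X X' := by
      refine ⟨insert v σ, insert v τ, hσ.2.2, hτ.2.2, ?_, ?_, ?_, rfl⟩
      · refine Finset.ssubset_iff_subset_ne.2 ⟨Finset.insert_subset_insert v hst.1, ?_⟩
        intro he
        have := congrArg (fun t => Finset.erase t v) he
        simp only [Finset.erase_insert hvτ, Finset.erase_insert hvσ] at this
        exact hst.ne this
      · rw [Finset.card_insert_of_notMem hvσ, Finset.card_insert_of_notMem hvτ, hcard]
      · intro ρ hρ hρs
        have := hup ρ hρ (insert v τ) (Or.inr rfl) hρs.1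
        rcases this with h | h
        · exact h
        · exact absurd h (Finset.ssubset_iff_subset_ne.1 hρs).2.symm
    have hins_eq : ∀ ρ₁ ρ₂ : Finset V, v ∉ ρ₁ → v ∉ ρ₂ →
        (insert v ρ₁ = insert v ρ₂ ↔ ρ₁ = ρ₂) := by
      intro ρ₁ ρ₂ h1 h2
      constructor
      · intro he
        have : (insert v ρ₁).erase v = (insert v ρ₂).erase v := by rw [he]
        rwa [Finset.erase_insert h1, Finset.erase_insert h2] at this
      · intro he; rw [he]
    have hlinkZ : X'.link v = Z := by
      apply ext'
      rw [hZ, ← hX, link_faces, link_faces]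
      ext ρ
      simp only [Set.mem_setOf_eq, hX'faces, Set.mem_diff, Set.mem_insert_iff,
        Set.mem_singleton_iff]
      constructor
      · rintro ⟨h1, h2, h3, h4⟩
        refine ⟨⟨h1, h2, h3⟩, ?_⟩
        push_neg
        constructor
        · intro he; exact h4 (Or.inl ((hins_eq ρ σ h1 hvσ).2 he))
        · intro he; exact h4 (Or.inr ((hins_eq ρ τ h1 hvτ).2 he))
      · rintro ⟨⟨h1, h2, h3⟩, h4⟩
        push_neg at h4
        refine ⟨h1, h2, h3, ?_⟩
        rintro (he | he)
        · exact h4.1 ((hins_eq ρ σ h1 hvσ).1 he)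
        · exact h4.2 ((hins_eq ρ τ h1 hvτ).1 he)
    have hdel : X'.del v = X.del v := by
      apply ext'
      ext ρ
      show ρ ∈ X'.faces ∧ v ∉ ρ ↔ ρ ∈ X.faces ∧ v ∉ ρ
      rw [hX'faces]
      constructor
      · rintro ⟨⟨h1, _⟩, h2⟩; exact ⟨h1, h2⟩
      · rintro ⟨h1, h2⟩
        refine ⟨⟨h1, ?_⟩, h2⟩
        rintro (rfl | rfl) <;> exact h2 (Finset.mem_insert_self v _)
    obtain ⟨X'', hcX'', hlX'', hdX''⟩ := ih X' hlinkZ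
    exact ⟨X'', .step X X' X'' hcol hcX'', hlX'', hdX''.trans hdel⟩

/-- If the link of `v` collapses to a point, `X` collapses onto the deletion of `v`. -/
theorem collapses_del [DecidableEq V] (X : SComplex V) (v : V) {w : V}
    (hc : Collapses (X.link v) (point w)) : Collapses X (X.del v) := by
  obtain ⟨X', hcX', hlX', hdX'⟩ := nered_aux hc X rfl
  have hlf : (X'.link v).faces = {({w} : Finset V)} := by rw [hlX']; rfl
  have hwlink : ({w} : Finset V) ∈ (X'.link v).faces := by rw [hlf]; rfl
  have hvw : v ≠ w := fun he => hwlink.1 (he ▸ Finset.mem_singleton_self w)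
  have hvwX : insert v ({w} : Finset V) ∈ X'.faces := hwlink.2.2
  have hvX : ({v} : Finset V) ∈ X'.faces :=
    X'.down_closed _ hvwX {v} (Finset.singleton_subset_iff.2 (Finset.mem_insert_self v _))
      (Finset.singleton_nonempty v)
  have hcol : IsElemCollapse X' (X.del v) := by
    refine ⟨insert v {w}, {v}, hvwX, hvX, ?_, ?_, ?_, ?_⟩
    · refine Finset.ssubset_iff_subset_ne.2
        ⟨Finset.singleton_subset_iff.2 (Finset.mem_insert_self v _), ?_⟩
      intro he
      have : w ∈ ({v} : Finset V) := he ▸ Finset.mem_insert_of_mem (Finset.mem_singleton_self w)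
      exact hvw (Finset.mem_singleton.1 this).symm
    · rw [Finset.card_insert_of_notMem (by simpa using hvw), Finset.card_singleton,
        Finset.card_singleton]
    · intro ρ hρ hρs
      have hvρ : v ∈ ρ := hρs.1 (Finset.mem_singleton_self v)
      have hne : (ρ.erase v).Nonempty := by
        rcases (X'.nonempty_of_mem ρ hρ) with ⟨x, hx⟩
        by_contra hemp
        rw [Finset.not_nonempty_iff_eq_empty] at hemp
        apply (Finset.ssubset_iff_subset_ne.1 hρs).2
        apply Finset.Subset.antisymm (Finset.singleton_subset_iff.2 hvρ)
        intro y hy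
        rcases eq_or_ne y v with hyv | hyv
        · rw [hyv]; exact Finset.mem_singleton_self v
        · exact absurd (Finset.mem_erase.2 ⟨hyv, hy⟩) (by rw [hemp]; simp)
      have hmem : ρ.erase v ∈ (X'.link v).faces := by
        refine ⟨Finset.notMem_erase v ρ, hne, ?_⟩
        rw [Finset.insert_erase hvρ]; exact hρ
      rw [hlf] at hmem
      have : ρ.erase v = {w} := hmem
      rw [← Finset.insert_erase hvρ, this]
    · rw [← hdX']
      ext ρ
      show ρ ∈ X'.faces ∧ v ∉ ρ ↔ ρ ∈ X'.faces ∧ ρ ∉ _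
      constructor
      · rintro ⟨h1, h2⟩
        refine ⟨h1, ?_⟩
        rintro (rfl | rfl)
        · exact h2 (Finset.mem_insert_self v _)
        · exact h2 (Finset.mem_singleton_self v)
      · rintro ⟨h1, h2⟩
        refine ⟨h1, fun hvρ => ?_⟩
        by_cases hne : ρ = {v}
        · exact h2 (Or.inr hne)
        · have hnee : (ρ.erase v).Nonempty := by
            rcases X'.nonempty_of_mem ρ h1 with ⟨x, hx⟩
            by_contra hemp
            rw [Finset.not_nonempty_iff_eq_empty] at hemp
            apply hne
            apply Finset.Subset.antisymm _ (Finset.singleton_subset_iff.2 hvρ)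
            intro y hy
            rcases eq_or_ne y v with hyv | hyv
            · rw [hyv]; exact Finset.mem_singleton_self v
            · exact absurd (Finset.mem_erase.2 ⟨hyv, hy⟩) (by rw [hemp]; simp)
          have hmem : ρ.erase v ∈ (X'.link v).faces := by
            refine ⟨Finset.notMem_erase v ρ, hnee, ?_⟩
            rw [Finset.insert_erase hvρ]; exact h1
          rw [hlf] at hmem
          apply h2
          left
          rw [← Finset.insert_erase hvρ, hmem]
  exact hcX'.trans (.step X' (X.del v) (X.del v) hcol (.refl _))

theorem link_faces_finite [DecidableEq V] (X : SComplex V) (v : V)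
    (hfin : X.faces.Finite) : (X.link v).faces.Finite := by
  apply Set.Finite.subset (hfin.image (fun ρ => ρ.erase v))
  rintro σ ⟨h1, h2, h3⟩
  exact ⟨insert v σ, h3, Finset.erase_insert h1⟩

end SComplex

/-- Every nonevasive finite simplicial complex is collapsible: it collapses to
a single vertex. -/
theorem collapsible_of_nonevasive {V : Type*} [DecidableEq V] (X : SComplex V)
    (hfin : X.faces.Finite) (h : SComplex.Nonevasive X) :
    ∃ v : V, SComplex.Collapses X (SComplex.point v) := by
  revert hfin
  induction h with
  | point X v hfaces =>
    intro _
    exact ⟨v, by rw [SComplex.ext' (Y := SComplex.point v) hfaces]; exact .refl _⟩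
  | step X v hv hdel hlink ihdel ihlink =>
    intro hfin
    have hfindel : (X.del v).faces.Finite := hfin.subset (fun ρ h => h.1)
    have hfinlink : (X.link v).faces.Finite := SComplex.link_faces_finite X v hfin
    obtain ⟨w, hw⟩ := ihlink hfinlink
    obtain ⟨u, hu⟩ := ihdel hfindel
    exact ⟨u, (SComplex.collapses_del X v hw).trans hu⟩
end

section
/- Let P be a finite poset, φ : P → P a monotone map, and x ∈ P with φ(x) ≠ x. Then the join Δ(P_{<x}) * Δ(P_{>x}), i.e. the link of x in Δ(P), is nonevasive. -/
/-- A map `φ : P → P` on a poset is a *monotone poset map* if it is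
order-preserving and for every `x`, either `x ≤ φ x` or `φ x ≤ x`. -/
def IsMonotonePosetMap {P : Type*} [PartialOrder P] (φ : P → P) : Prop :=
  Monotone φ ∧ ∀ x : P, x ≤ φ x ∨ φ x ≤ x


lemma SComplex.ext'_s14 {V : Type*} {X Y : SComplex V} (h : X.faces = Y.faces) : X = Y := by
  cases X; cases Y; simp only at h; subst h; rfl

section Aux

variable {P : Type*} [PartialOrder P] [DecidableEq P]

lemma orderComplexOn_del (Q : Set P) (y : P) :
    (orderComplexOn P Q).del y = orderComplexOn P (Q \ {y}) := by
  apply SComplex.ext'_s14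
  ext σ
  constructor
  · rintro ⟨⟨hne, hQ, hchain⟩, hy⟩
    exact ⟨hne, fun z hz => ⟨hQ z hz, fun hzy => hy (hzy ▸ hz)⟩, hchain⟩
  · rintro ⟨hne, hQ, hchain⟩
    exact ⟨⟨hne, fun z hz => (hQ z hz).1, hchain⟩, fun hy => (hQ y hy).2 rfl⟩

lemma orderComplexOn_link (Q : Set P) (y : P) (hy : y ∈ Q) :
    (orderComplexOn P Q).link y
      = orderComplexOn P {z | z ∈ Q ∧ z ≠ y ∧ (z ≤ y ∨ y ≤ z)} := by
  apply SComplex.ext'_s14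
  ext σ
  constructor
  · rintro ⟨hyσ, hne, -, hQ, hchain⟩
    refine ⟨hne, fun z hz =>
      ⟨hQ z (Finset.mem_insert_of_mem hz), fun h => hyσ (h ▸ hz),
        hchain z (Finset.mem_insert_of_mem hz) y (Finset.mem_insert_self _ _)⟩,
      fun a ha b hb =>
        hchain a (Finset.mem_insert_of_mem ha) b (Finset.mem_insert_of_mem hb)⟩
  · rintro ⟨hne, hQ, hchain⟩
    refine ⟨fun h => (hQ y h).2.1 rfl, hne, ⟨y, Finset.mem_insert_self _ _⟩, ?_, ?_⟩
    · intro z hz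
      rcases Finset.mem_insert.1 hz with rfl | hz
      · exact hy
      · exact (hQ z hz).1
    · intro a ha b hb
      rcases Finset.mem_insert.1 ha with ha' | ha'
      · rcases Finset.mem_insert.1 hb with hb' | hb'
        · subst ha'; subst hb'; exact Or.inl le_rfl
        · subst ha'; exact ((hQ b hb').2.2).symm
      · rcases Finset.mem_insert.1 hb with hb' | hb'
        · subst hb'; exact (hQ a ha').2.2
        · exact hchain a ha' b hb'

lemma singleton_mem_orderComplexOn {Q : Set P} {y : P} (hy : y ∈ Q) :
    ({y} : Finset P) ∈ (orderComplexOn P Q).faces := by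
  refine ⟨Finset.singleton_nonempty y, ?_, ?_⟩
  · intro z hz; rw [Finset.mem_singleton] at hz; subst hz; exact hy
  · intro a ha b hb
    rw [Finset.mem_singleton] at ha hb; subst ha; subst hb; exact Or.inl le_rfl

lemma cone_nonevasive [Fintype P] (n : ℕ) :
    ∀ (Q : Set P), Q.ncard ≤ n → ∀ m ∈ Q, (∀ y ∈ Q, y ≤ m ∨ m ≤ y) →
      SComplex.Nonevasive (orderComplexOn P Q) := by
  induction n with
  | zero =>
    intro Q hQ m hm _
    exact absurd ((Set.ncard_eq_zero (Set.toFinite Q)).1 (Nat.le_zero.1 hQ))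
      (Set.nonempty_iff_ne_empty.1 ⟨m, hm⟩)
  | succ n ih =>
    intro Q hQ m hm hcomp
    by_cases hall : ∀ y ∈ Q, y = m
    · refine SComplex.Nonevasive.point _ m ?_
      ext σ
      simp only [Set.mem_singleton_iff]
      constructor
      · rintro ⟨hne, hQ', -⟩
        have hsub : σ ⊆ {m} := fun z hz => Finset.mem_singleton.2 (hall z (hQ' z hz))
        rcases Finset.subset_singleton_iff.1 hsub with rfl | rfl
        · exact absurd hne (by simp)
        · rfl
      · rintro rfl
        exact singleton_mem_orderComplexOn hm
    · push_neg at hall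
      obtain ⟨y, hyQ, hym⟩ := hall
      have hlt : (Q \ {y}).ncard < Q.ncard :=
        Set.ncard_diff_singleton_lt_of_mem hyQ (Set.toFinite Q)
      refine SComplex.Nonevasive.step _ y (singleton_mem_orderComplexOn hyQ) ?_ ?_
      · rw [orderComplexOn_del]
        exact ih _ (by omega) m ⟨hm, fun h => hym ((Set.mem_singleton_iff.1 h).symm ▸ rfl)⟩
          (fun z hz => hcomp z hz.1)
      · rw [orderComplexOn_link _ _ hyQ]
        have hsub : {z | z ∈ Q ∧ z ≠ y ∧ (z ≤ y ∨ y ≤ z)} ⊆ Q \ {y} :=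
          fun z hz => ⟨hz.1, hz.2.1⟩
        refine ih _ (by
          have := Set.ncard_le_ncard hsub (Set.toFinite (Q \ {y}))
          omega) m ⟨hm, fun h => hym h.symm, (hcomp y hyQ).symm⟩
          (fun z hz => hcomp z hz.1)

lemma good_up [Fintype P] (n : ℕ) :
    ∀ (L U : Set P) (m : P) (Φ : P → P),
      (L ∪ U).ncard ≤ n → m ∈ U →
      (∀ l ∈ L, ∀ u ∈ U, l < u) →
      (∀ u ∈ U, Φ u ∈ U) →
      (∀ a ∈ U, ∀ b ∈ U, a ≤ b → Φ a ≤ Φ b) →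
      (∀ u ∈ U, u ≤ Φ u ∨ Φ u ≤ u) →
      (∀ u ∈ U, m ≤ Φ u) →
      SComplex.Nonevasive (orderComplexOn P (L ∪ U)) := by
  induction n with
  | zero =>
    intro L U m Φ hcard hm _ _ _ _ _
    exact absurd ((Set.ncard_eq_zero (Set.toFinite (L ∪ U))).1 (Nat.le_zero.1 hcard))
      (Set.nonempty_iff_ne_empty.1 ⟨m, Or.inr hm⟩)
  | succ n ih =>
    intro L U m Φ hcard hm hLU hΦU hmono hcmp hmle
    by_cases hall : ∀ u ∈ U, m ≤ u
    · refine cone_nonevasive (n + 1) _ hcard m (Or.inr hm) ?_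
      rintro z (hz | hz)
      · exact Or.inl (hLU z hz m hm).le
      · exact Or.inr (hall z hz)
    · push_neg at hall
      obtain ⟨y, hyU, hym⟩ := hall
      have hyΦ : y < Φ y := by
        rcases hcmp y hyU with h | h
        · exact lt_of_le_of_ne h (fun e => hym (e ▸ hmle y hyU))
        · exact absurd ((hmle y hyU).trans h) hym
      have hmy : m ≠ y := fun e => hym e.le
      have hlt : ((L ∪ U) \ {y}).ncard < (L ∪ U).ncard :=
        Set.ncard_diff_singleton_lt_of_mem (Or.inr hyU) (Set.toFinite _)
      have hyLU : y ∈ L ∪ U := Or.inr hyU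
      refine SComplex.Nonevasive.step _ y
        (singleton_mem_orderComplexOn hyLU) ?_ ?_
      · rw [orderComplexOn_del]
        have heq : (L ∪ U) \ {y} = L ∪ (U \ {y}) := by
          ext z
          constructor
          · rintro ⟨hz | hz, hzy⟩
            · exact Or.inl hz
            · exact Or.inr ⟨hz, hzy⟩
          · rintro (hz | ⟨hz, hzy⟩)
            · exact ⟨Or.inl hz, fun e =>
                lt_irrefl y (hLU z hz y hyU |>.trans_eq' (Set.mem_singleton_iff.1 e))⟩
            · exact ⟨Or.inr hz, hzy⟩
        rw [heq]
        refine ih L (U \ {y}) m Φ (by rw [← heq]; omega)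
          ⟨hm, fun e => hmy (Set.mem_singleton_iff.1 e)⟩
          (fun l hl u hu => hLU l hl u hu.1)
          (fun u hu => ⟨hΦU u hu.1, fun e => hym ((Set.mem_singleton_iff.1 e) ▸ hmle u hu.1)⟩)
          (fun a ha b hb => hmono a ha.1 b hb.1)
          (fun u hu => hcmp u hu.1)
          (fun u hu => hmle u hu.1)
      · rw [orderComplexOn_link _ _ hyLU]
        have heq : {z | z ∈ L ∪ U ∧ z ≠ y ∧ (z ≤ y ∨ y ≤ z)}
            = {z | z ∈ L ∪ U ∧ z < y} ∪ {z | z ∈ U ∧ y < z} := by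
          ext z
          constructor
          · rintro ⟨hz, hzy, hc | hc⟩
            · exact Or.inl ⟨hz, lt_of_le_of_ne hc hzy⟩
            · have hz' : z ∈ U := by
                rcases hz with hz | hz
                · exact absurd ((hLU z hz y hyU).trans (lt_of_le_of_ne hc (Ne.symm hzy)))
                    (lt_irrefl z)
                · exact hz
              exact Or.inr ⟨hz', lt_of_le_of_ne hc (Ne.symm hzy)⟩
          · rintro (⟨hz, hc⟩ | ⟨hz, hc⟩)
            · exact ⟨hz, hc.ne, Or.inl hc.le⟩
            · exact ⟨Or.inr hz, hc.ne', Or.inr hc.le⟩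
        rw [heq]
        have hsub : {z | z ∈ L ∪ U ∧ z < y} ∪ {z | z ∈ U ∧ y < z} ⊆ (L ∪ U) \ {y} := by
          rintro z (⟨hz, hc⟩ | ⟨hz, hc⟩)
          · exact ⟨hz, fun e => hc.ne (Set.mem_singleton_iff.1 e)⟩
          · exact ⟨Or.inr hz, fun e => hc.ne' (Set.mem_singleton_iff.1 e)⟩
        refine ih _ _ (Φ y) Φ
          (by have := Set.ncard_le_ncard hsub (Set.toFinite ((L ∪ U) \ {y})); omega)
          ⟨hΦU y hyU, hyΦ⟩
          (fun l hl u hu => hl.2.trans hu.2)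
          (fun u hu => ⟨hΦU u hu.1, hyΦ.trans_le (hmono y hyU u hu.1 hu.2.le)⟩)
          (fun a ha b hb => hmono a ha.1 b hb.1)
          (fun u hu => hcmp u hu.1)
          (fun u hu => hmono y hyU u hu.1 hu.2.le)

lemma good_down [Fintype P] (n : ℕ) :
    ∀ (L U : Set P) (m : P) (Φ : P → P),
      (L ∪ U).ncard ≤ n → m ∈ U →
      (∀ l ∈ L, ∀ u ∈ U, u < l) →
      (∀ u ∈ U, Φ u ∈ U) →
      (∀ a ∈ U, ∀ b ∈ U, a ≤ b → Φ a ≤ Φ b) →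
      (∀ u ∈ U, u ≤ Φ u ∨ Φ u ≤ u) →
      (∀ u ∈ U, Φ u ≤ m) →
      SComplex.Nonevasive (orderComplexOn P (L ∪ U)) := by
  induction n with
  | zero =>
    intro L U m Φ hcard hm _ _ _ _ _
    exact absurd ((Set.ncard_eq_zero (Set.toFinite (L ∪ U))).1 (Nat.le_zero.1 hcard))
      (Set.nonempty_iff_ne_empty.1 ⟨m, Or.inr hm⟩)
  | succ n ih =>
    intro L U m Φ hcard hm hLU hΦU hmono hcmp hmle
    by_cases hall : ∀ u ∈ U, u ≤ m
    · refine cone_nonevasive (n + 1) _ hcard m (Or.inr hm) ?_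
      rintro z (hz | hz)
      · exact Or.inr (hLU z hz m hm).le
      · exact Or.inl (hall z hz)
    · push_neg at hall
      obtain ⟨y, hyU, hym⟩ := hall
      have hyΦ : Φ y < y := by
        rcases hcmp y hyU with h | h
        · exact absurd (h.trans (hmle y hyU)) hym
        · exact lt_of_le_of_ne h (fun e => hym (e ▸ hmle y hyU))
      have hmy : m ≠ y := fun e => hym e.ge
      have hlt : ((L ∪ U) \ {y}).ncard < (L ∪ U).ncard :=
        Set.ncard_diff_singleton_lt_of_mem (Or.inr hyU) (Set.toFinite _)
      have hyLU : y ∈ L ∪ U := Or.inr hyU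
      refine SComplex.Nonevasive.step _ y
        (singleton_mem_orderComplexOn hyLU) ?_ ?_
      · rw [orderComplexOn_del]
        have heq : (L ∪ U) \ {y} = L ∪ (U \ {y}) := by
          ext z
          constructor
          · rintro ⟨hz | hz, hzy⟩
            · exact Or.inl hz
            · exact Or.inr ⟨hz, hzy⟩
          · rintro (hz | ⟨hz, hzy⟩)
            · exact ⟨Or.inl hz, fun e =>
                lt_irrefl y ((hLU z hz y hyU).trans_eq (Set.mem_singleton_iff.1 e))⟩
            · exact ⟨Or.inr hz, hzy⟩
        rw [heq]
        refine ih L (U \ {y}) m Φ (by rw [← heq]; omega)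
          ⟨hm, fun e => hmy (Set.mem_singleton_iff.1 e)⟩
          (fun l hl u hu => hLU l hl u hu.1)
          (fun u hu => ⟨hΦU u hu.1, fun e => hym ((Set.mem_singleton_iff.1 e) ▸ hmle u hu.1)⟩)
          (fun a ha b hb => hmono a ha.1 b hb.1)
          (fun u hu => hcmp u hu.1)
          (fun u hu => hmle u hu.1)
      · rw [orderComplexOn_link _ _ hyLU]
        have heq : {z | z ∈ L ∪ U ∧ z ≠ y ∧ (z ≤ y ∨ y ≤ z)}
            = {z | z ∈ L ∪ U ∧ y < z} ∪ {z | z ∈ U ∧ z < y} := by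
          ext z
          constructor
          · rintro ⟨hz, hzy, hc | hc⟩
            · have hz' : z ∈ U := by
                rcases hz with hz | hz
                · exact absurd ((lt_of_le_of_ne hc hzy).trans (hLU z hz y hyU))
                    (lt_irrefl z)
                · exact hz
              exact Or.inr ⟨hz', lt_of_le_of_ne hc hzy⟩
            · exact Or.inl ⟨hz, lt_of_le_of_ne hc (Ne.symm hzy)⟩
          · rintro (⟨hz, hc⟩ | ⟨hz, hc⟩)
            · exact ⟨hz, hc.ne', Or.inr hc.le⟩
            · exact ⟨Or.inr hz, hc.ne, Or.inl hc.le⟩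
        rw [heq]
        have hsub : {z | z ∈ L ∪ U ∧ y < z} ∪ {z | z ∈ U ∧ z < y} ⊆ (L ∪ U) \ {y} := by
          rintro z (⟨hz, hc⟩ | ⟨hz, hc⟩)
          · exact ⟨hz, fun e => hc.ne' (Set.mem_singleton_iff.1 e)⟩
          · exact ⟨Or.inr hz, fun e => hc.ne (Set.mem_singleton_iff.1 e)⟩
        refine ih _ _ (Φ y) Φ
          (by have := Set.ncard_le_ncard hsub (Set.toFinite ((L ∪ U) \ {y})); omega)
          ⟨hΦU y hyU, hyΦ⟩
          (fun l hl u hu => hu.2.trans hl.2)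
          (fun u hu => ⟨hΦU u hu.1, (hmono u hu.1 y hyU hu.2.le).trans_lt hyΦ⟩)
          (fun a ha b hb => hmono a ha.1 b hb.1)
          (fun u hu => hcmp u hu.1)
          (fun u hu => hmono u hu.1 y hyU hu.2.le)

end Aux

/-- For a finite poset `P`, a monotone map `φ : P → P`, and `x` with `φ x ≠ x`,
the join `Δ(P_{<x}) * Δ(P_{>x})`, i.e. the link of `x` in the order complex
`Δ(P)`, is nonevasive. -/
theorem nonevasive_link {P : Type*} [Fintype P] [DecidableEq P]
    [PartialOrder P] (φ : P → P) (h : IsMonotonePosetMap φ) (x : P)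
    (hx : φ x ≠ x) :
    SComplex.Nonevasive ((orderComplexOn P Set.univ).link x) := by
  rw [orderComplexOn_link _ x (Set.mem_univ x)]
  have hset : {z : P | z ∈ Set.univ ∧ z ≠ x ∧ (z ≤ x ∨ x ≤ z)}
      = {z | z < x} ∪ {z | x < z} := by
    ext z
    constructor
    · rintro ⟨-, hzx, hc | hc⟩
      · exact Or.inl (lt_of_le_of_ne hc hzx)
      · exact Or.inr (lt_of_le_of_ne hc (Ne.symm hzx))
    · rintro (hc | hc)
      · exact ⟨Set.mem_univ z, hc.ne, Or.inl hc.le⟩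
      · exact ⟨Set.mem_univ z, hc.ne', Or.inr hc.le⟩
  rw [hset]
  obtain ⟨hmono, hcmp⟩ := h
  rcases hcmp x with hle | hle
  · have hlt : x < φ x := lt_of_le_of_ne hle (fun e => hx e.symm)
    exact good_up ({z | z < x} ∪ {z | x < z}).ncard _ _ (φ x) φ le_rfl hlt
      (fun l hl u hu => hl.trans hu)
      (fun u hu => hlt.trans_le (hmono hu.le))
      (fun a _ b _ hab => hmono hab)
      (fun u _ => hcmp u)
      (fun u hu => hmono hu.le)
  · have hlt : φ x < x := lt_of_le_of_ne hle hx
    rw [Set.union_comm]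
    exact good_down ({z | x < z} ∪ {z | z < x}).ncard _ _ (φ x) φ le_rfl hlt
      (fun l hl u hu => hu.trans hl)
      (fun u hu => (hmono hu.le).trans_lt hlt)
      (fun a _ b _ hab => hmono hab)
      (fun u _ => hcmp u)
      (fun u hu => hmono hu.le)
end
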